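/- (Decreasing increments of f) For every natural number N ≥ 1, the increments of f are nonincreasing: f(N+2) − f(N+1) ≤ f(N+1) − f(N). -/

import Mathlib

/-!
With `g x = log (1 + β x²)` we have `f N = B g (S N)`. The function `g` is increasing on `[0, ∞)`
and concave where `β x² ≥ 1`; since `β (S N)² ≥ β α₁² ≥ 1` and the steps `α (N+1) ≥ α (N+2)` shrink,
`g (S (N+2)) - g (S (N+1)) ≤ g (S (N+1) + α (N+1)) - g (S (N+1)) ≤ g (S (N+1)) - g (S N)`.
-/

open Real

section LogOneAddMulSq

variable {β x y u v : ℝ}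

lemma log_one_add_mul_sq_le_of_le (hβ : 0 ≤ β) (hx : 0 ≤ x) (hxy : x ≤ y) :
    log (1 + β * x ^ 2) ≤ log (1 + β * y ^ 2) := by
  gcongr

lemma one_add_mul_sq_mul_le_sq (hβ : 0 ≤ β) (hx : 0 ≤ x) (hu : 0 ≤ u) (hβx : 1 ≤ β * x ^ 2) :
    (1 + β * (x + 2 * u) ^ 2) * (1 + β * x ^ 2) ≤ (1 + β * (x + u) ^ 2) ^ 2 := by
  have hdiff : (1 + β * (x + u) ^ 2) ^ 2 - (1 + β * (x + 2 * u) ^ 2) * (1 + β * x ^ 2)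
      = β * u ^ 2 * (2 * (β * x ^ 2 - 1) + β * u * (4 * x + u)) := by ring
  have hfactor : 0 ≤ β * u * (4 * x + u) := by positivity
  have : 0 ≤ β * u ^ 2 * (2 * (β * x ^ 2 - 1) + β * u * (4 * x + u)) :=
    mul_nonneg (by positivity) (by linarith)
  linarith

lemma log_one_add_mul_sq_add_log_le (hβ : 0 ≤ β) (hx : 0 ≤ x) (hu : 0 ≤ u)
    (hβx : 1 ≤ β * x ^ 2) :
    log (1 + β * (x + 2 * u) ^ 2) + log (1 + β * x ^ 2) ≤ 2 * log (1 + β * (x + u) ^ 2) := by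
  rw [← log_mul (by positivity) (by positivity), ← Nat.cast_ofNat, ← log_pow]
  exact log_le_log (by positivity) (one_add_mul_sq_mul_le_sq hβ hx hu hβx)

lemma log_one_add_mul_sq_increment_le (hβ : 0 ≤ β) (hx : 0 ≤ x) (hv : 0 ≤ v) (hvu : v ≤ u)
    (hβx : 1 ≤ β * x ^ 2) :
    log (1 + β * (x + u + v) ^ 2) - log (1 + β * (x + u) ^ 2)
      ≤ log (1 + β * (x + u) ^ 2) - log (1 + β * x ^ 2) := by
  have hmono :=
    log_one_add_mul_sq_le_of_le hβ (by linarith) (show x + u + v ≤ x + 2 * u by linarith)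
  have hconc := log_one_add_mul_sq_add_log_le hβ hx (hv.trans hvu) hβx
  linarith

end LogOneAddMulSq

/-- Decreasing increments of f: the increments of f are nonincreasing. -/
theorem f_increments_nonincreasing
    (B β : ℝ) (hB : 0 < B) (hβ : 0 < β)
    (α : ℕ → ℝ) (hα_pos : ∀ n, 1 ≤ n → 0 < α n)
    (hα_dec : ∀ n, 1 ≤ n → α (n + 1) ≤ α n)
    (hβα : 1 ≤ β * (α 1) ^ 2)
    (S : ℕ → ℝ) (hS : ∀ N, S N = ∑ n ∈ Finset.Icc 1 N, α n)
    (f : ℕ → ℝ) (hf : ∀ N, f N = B * Real.log (1 + β * (S N) ^ 2)) :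
    ∀ N : ℕ, 1 ≤ N → f (N + 2) - f (N + 1) ≤ f (N + 1) - f N := by
  intro N hN
  have hS_succ (M : ℕ) : S (M + 1) = S M + α (M + 1) := by
    rw [hS, hS, Finset.sum_Icc_succ_top (by omega)]
  have hα1_le : α 1 ≤ S N := by
    rw [hS]
    exact Finset.single_le_sum (fun n hn ↦ (hα_pos n (Finset.mem_Icc.1 hn).1).le)
      (Finset.mem_Icc.2 ⟨le_rfl, hN⟩)
  have hα1 : 0 < α 1 := hα_pos 1 le_rfl
  have hβS : 1 ≤ β * S N ^ 2 := hβα.trans (by gcongr)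
  have hinc := log_one_add_mul_sq_increment_le hβ.le (hα1.trans_le hα1_le).le
    (hα_pos (N + 2) (by omega)).le (hα_dec (N + 1) (by omega)) hβS
  rw [← hS_succ, ← hS_succ] at hinc
  rw [hf, hf, hf, ← mul_sub, ← mul_sub]
  exact mul_le_mul_of_nonneg_left hinc hB.le
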